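/- Let ν be a complex number, D ⊆ ℂ an open set, and q analytic on D satisfying the Painlevé II equation q''(s) = s·q(s) + 2·q(s)³ - ν on D. Define H(s) := (q'(s))² - s·q(s)² - q(s)⁴ + 2ν·q(s), and set A₁ := -H/2, B₁ := -q/2, A₂ := (H² - q²)/8, B₂ := -(q' + q·H)/4, A₃(s) := (2·q'(s)·q(s) + (3·q(s)² - 2s)·H(s) - H(s)³ + 2ν²)/48, B₃ := -(2q'' - 3q³ + 2q'·H + q·H²)/16. Then Aₙ'(s) = (-1)ⁿ·q(s)·Bₙ(s) on D for each n ∈ {1, 2, 3}. -/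

import Mathlib

/-!
Painlevé II is the Hamiltonian system of `H`, so along a solution `H` changes only through
its explicit dependence on `s`: `dH/ds = ∂H/∂s = -q²`. Each identity then follows by
differentiating `Aₙ` as a polynomial in `s, q, q', H` and reducing with `q'' = sq + 2q³ - ν`.
-/

open Complex

/-- The Painlevé II Hamiltonian `H = (q')² - s q² - q⁴ + 2νq`. -/
noncomputable def PIIHamiltonian (ν : ℂ) (q q' : ℂ → ℂ) (s : ℂ) : ℂ :=
  (q' s) ^ 2 - s * (q s) ^ 2 - (q s) ^ 4 + 2 * ν * q s

theorem hasDerivAt_PIIHamiltonian {ν s : ℂ} {q q' q'' : ℂ → ℂ}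
    (hq : HasDerivAt q (q' s) s) (hq' : HasDerivAt q' (q'' s) s)
    (hPII : q'' s = s * q s + 2 * (q s) ^ 3 - ν) :
    HasDerivAt (PIIHamiltonian ν q q') (-(q s) ^ 2) s := by
  have h := (((hq'.pow 2).sub ((hasDerivAt_id s).mul (hq.pow 2))).sub (hq.pow 4)).add
    ((hasDerivAt_const s (2 * ν)).mul hq)
  refine h.congr_deriv ?_
  simp only [Pi.pow_apply, id, Nat.cast_ofNat]
  linear_combination 2 * q' s * hPII

theorem expansion_coefficients_derivative_general (ν : ℂ) (D : Set ℂ)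
    (q q' q'' : ℂ → ℂ)
    (hq : ∀ s ∈ D, HasDerivAt q (q' s) s)
    (hq' : ∀ s ∈ D, HasDerivAt q' (q'' s) s)
    (hPII : ∀ s ∈ D, q'' s = s * q s + 2 * (q s) ^ 3 - ν) :
    (∀ s ∈ D, HasDerivAt (fun t => -(PIIHamiltonian ν q q' t) / 2)
      ((-1 : ℂ) ^ 1 * q s * (-(q s) / 2)) s) ∧
    (∀ s ∈ D, HasDerivAt
      (fun t => ((PIIHamiltonian ν q q' t) ^ 2 - (q t) ^ 2) / 8)
      ((-1 : ℂ) ^ 2 * q s * (-(q' s + q s * PIIHamiltonian ν q q' s) / 4)) s) ∧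
    (∀ s ∈ D, HasDerivAt
      (fun t => (2 * q' t * q t + (3 * (q t) ^ 2 - 2 * t) * PIIHamiltonian ν q q' t -
        (PIIHamiltonian ν q q' t) ^ 3 + 2 * ν ^ 2) / 48)
      ((-1 : ℂ) ^ 3 * q s *
        (-(2 * q'' s - 3 * (q s) ^ 3 + 2 * q' s * PIIHamiltonian ν q q' s +
          q s * (PIIHamiltonian ν q q' s) ^ 2) / 16)) s) := by
  refine ⟨fun s hs => ?_, fun s hs => ?_, fun s hs => ?_⟩ <;>
    have hH := hasDerivAt_PIIHamiltonian (hq s hs) (hq' s hs) (hPII s hs)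
  · exact (hH.neg.div_const 2).congr_deriv (by ring)
  · refine (((hH.pow 2).sub ((hq s hs).pow 2)).div_const 8).congr_deriv ?_
    simp only [Nat.cast_ofNat]
    ring
  · have hA₃ := (((((hasDerivAt_const s 2).mul (hq' s hs)).mul (hq s hs)).add
      (((((hq s hs).pow 2).const_mul 3).sub ((hasDerivAt_id s).const_mul 2)).mul hH)).sub
      (hH.pow 3)).add_const (2 * ν ^ 2) |>.div_const 48
    refine hA₃.congr_deriv ?_
    simp only [Pi.mul_apply, Pi.pow_apply, Pi.sub_apply, id, Nat.cast_ofNat, PIIHamiltonian]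
    linear_combination (-(q s) / 12) * hPII s hs

/-- The coefficients `Aₙ, Bₙ` (A.15)–(A.16) of the asymptotic expansion of the
Flaschka–Newell solution satisfy `Aₙ' = (-1)ⁿ q Bₙ` for `n ∈ {1, 2, 3}`. -/
theorem expansion_coefficients_derivative (ν : ℂ) (D : Set ℂ) (hD : IsOpen D)
    (q q' q'' : ℂ → ℂ)
    (hq : ∀ s ∈ D, HasDerivAt q (q' s) s)
    (hq' : ∀ s ∈ D, HasDerivAt q' (q'' s) s)
    (hPII : ∀ s ∈ D, q'' s = s * q s + 2 * (q s) ^ 3 - ν) :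
    (∀ s ∈ D, HasDerivAt (fun t => -(PIIHamiltonian ν q q' t) / 2)
      ((-1 : ℂ) ^ 1 * q s * (-(q s) / 2)) s) ∧
    (∀ s ∈ D, HasDerivAt
      (fun t => ((PIIHamiltonian ν q q' t) ^ 2 - (q t) ^ 2) / 8)
      ((-1 : ℂ) ^ 2 * q s * (-(q' s + q s * PIIHamiltonian ν q q' s) / 4)) s) ∧
    (∀ s ∈ D, HasDerivAt
      (fun t => (2 * q' t * q t + (3 * (q t) ^ 2 - 2 * t) * PIIHamiltonian ν q q' t -
        (PIIHamiltonian ν q q' t) ^ 3 + 2 * ν ^ 2) / 48)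
      ((-1 : ℂ) ^ 3 * q s *
        (-(2 * q'' s - 3 * (q s) ^ 3 + 2 * q' s * PIIHamiltonian ν q q' s +
          q s * (PIIHamiltonian ν q q' s) ^ 2) / 16)) s) :=
  expansion_coefficients_derivative_general ν D q q' q'' hq hq' hPII
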